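/- Let G=(V,E) be a finite simple graph. For every w ∈ V and every W ⊆ N(w), the star inequality x(W) + (|W| − 1)·x_w ≤ |W| is valid for the co-2-plex polytope P(G), i.e., it is satisfied by the incidence vector of every co-2-plex of G. -/

import Mathlib

open Finset
open scoped Classical

noncomputable section

variable {V : Type*} [Fintype V]

/-- A co-2-plex: a set of vertices inducing a subgraph of maximum degree at most 1. -/
def IsCo2Plex {α : Type*} (G : SimpleGraph α) (S : Finset α) : Prop :=
  ∀ u ∈ S, (S.filter fun v => G.Adj u v).card ≤ 1

/-- Incidence vector of a vertex set. -/
def chiV {α : Type*} (S : Finset α) : α → ℝ := fun v => if v ∈ S then 1 else 0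

/-- Incidence vector (on edges) of the set of edges with both endpoints in `S`. -/
def chiE {α : Type*} (G : SimpleGraph α) (S : Finset α) : G.edgeSet → ℝ :=
  fun e => if ∀ v ∈ (e : Sym2 α), v ∈ S then 1 else 0

/-- The co-2-plex polytope. -/
def co2PlexPolytope (G : SimpleGraph V) : Set (V → ℝ) :=
  convexHull ℝ {x | ∃ S : Finset V, IsCo2Plex G S ∧ x = chiV S}

/-- The extended co-2-plex polytope. -/
def co2PlexPolytopeExt (G : SimpleGraph V) : Set ((V → ℝ) × (G.edgeSet → ℝ)) :=
  convexHull ℝ {p | ∃ S : Finset V, IsCo2Plex G S ∧ p = (chiV S, chiE G S)}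

/-- δ(v): edges incident to `v`. -/
def inc (G : SimpleGraph V) (v : V) : Finset G.edgeSet :=
  univ.filter fun e => v ∈ (e : Sym2 V)

/-- E(W): edges with both endpoints in W. -/
def edgesIn (G : SimpleGraph V) (W : Finset V) : Finset G.edgeSet :=
  univ.filter fun e => ∀ v ∈ (e : Sym2 V), v ∈ W

/-- E(V \ W): edges with both endpoints outside W. -/
def edgesOut (G : SimpleGraph V) (W : Finset V) : Finset G.edgeSet :=
  univ.filter fun e => ∀ v ∈ (e : Sym2 V), v ∉ W

/-- δ(W): edges with exactly one endpoint in W. -/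
def edgesCut (G : SimpleGraph V) (W : Finset V) : Finset G.edgeSet :=
  univ.filter fun e => (∃ v ∈ (e : Sym2 V), v ∈ W) ∧ ∃ v ∈ (e : Sym2 V), v ∉ W

/-- The utter graph of `G`. -/
def utter (G : SimpleGraph V) : SimpleGraph (V ⊕ G.edgeSet) where
  Adj a b :=
    match a, b with
    | Sum.inl u, Sum.inl v => G.Adj u v
    | Sum.inl w, Sum.inr e => w ∈ (e : Sym2 V) ∨ ∃ z ∈ (e : Sym2 V), G.Adj w z
    | Sum.inr e, Sum.inl w => w ∈ (e : Sym2 V) ∨ ∃ z ∈ (e : Sym2 V), G.Adj w z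
    | Sum.inr e, Sum.inr f =>
        e ≠ f ∧ ((∃ v, v ∈ (e : Sym2 V) ∧ v ∈ (f : Sym2 V)) ∨
          ∃ a ∈ (e : Sym2 V), ∃ b ∈ (f : Sym2 V), G.Adj a b)
  symm := ⟨by
    rintro (u | e) (v | f) h
    · exact h.symm
    · exact h
    · exact h
    · obtain ⟨hne, h⟩ := h
      refine ⟨hne.symm, ?_⟩
      rcases h with ⟨v, hv1, hv2⟩ | ⟨a, ha, b, hb, hab⟩
      · exact Or.inl ⟨v, hv2, hv1⟩
      · exact Or.inr ⟨b, hb, a, ha, hab.symm⟩⟩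
  loopless := ⟨by
    rintro (u | e) h
    · exact G.irrefl h
    · exact h.1 rfl⟩

/-- An utter clique: a pair [W, F] whose union is a clique of the utter graph. -/
def IsUtterClique (G : SimpleGraph V) (W : Finset V) (F : Finset G.edgeSet) : Prop :=
  (utter G).IsClique (Sum.inl '' (W : Set V) ∪ Sum.inr '' (F : Set G.edgeSet))

/-- A maximal utter clique. -/
def IsMaxUtterClique (G : SimpleGraph V) (W : Finset V) (F : Finset G.edgeSet) : Prop :=
  IsUtterClique G W F ∧
    (∀ v ∉ W, ¬ IsUtterClique G (insert v W) F) ∧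
    (∀ e ∉ F, ¬ IsUtterClique G W (insert e F))

/-- The contraction G/F: vertices are the connected components of the spanning
subgraph (V, F); two components are adjacent iff some edge of `G` joins them. -/
def contract {α : Type*} (G : SimpleGraph α) (F : Set (Sym2 α)) :
    SimpleGraph (SimpleGraph.fromEdgeSet F).ConnectedComponent where
  Adj c d := c ≠ d ∧ ∃ u v, G.Adj u v ∧
      (SimpleGraph.fromEdgeSet F).connectedComponentMk u = c ∧
      (SimpleGraph.fromEdgeSet F).connectedComponentMk v = d
  symm := ⟨by
    rintro c d ⟨hne, u, v, h, hu, hv⟩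
    exact ⟨hne.symm, v, u, h.symm, hv, hu⟩⟩
  loopless := ⟨by
    rintro c ⟨hne, _⟩
    exact hne rfl⟩

/-- A graph is perfect if every induced subgraph has chromatic number equal to
its clique number. -/
def IsPerfect {α : Type*} (G : SimpleGraph α) : Prop :=
  ∀ s : Set α, (G.induce s).chromaticNumber = ((G.induce s).cliqueNum : ℕ∞)

/-- A graph is contraction perfect if all its contractions (by edge subsets) are perfect. -/
def ContractionPerfect (G : SimpleGraph V) : Prop :=
  ∀ F : Set (Sym2 V), F ⊆ G.edgeSet → IsPerfect (contract G F)

/-- Chordal: no induced cycle of length at least 4. -/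
def Chordal (G : SimpleGraph V) : Prop :=
  ∀ n, 4 ≤ n → IsEmpty (SimpleGraph.cycleGraph n ↪g G)

/-- Maximal clique (as a finset). -/
def IsMaxCliqueF (G : SimpleGraph V) (K : Finset V) : Prop :=
  G.IsClique (K : Set V) ∧ ∀ K' : Finset V, G.IsClique (K' : Set V) → K ⊆ K' → K = K'

/-- A 2-plex: every vertex of the induced subgraph has degree at least |K| - 2 in it. -/
def Is2Plex (G : SimpleGraph V) (K : Finset V) : Prop :=
  ∀ v ∈ K, K.card - 2 ≤ (K.filter fun u => G.Adj v u).card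

/-- α₂(G[W]): the maximum cardinality of a co-2-plex contained in `W`. -/
def co2plexNumOn (G : SimpleGraph V) (W : Finset V) : ℕ :=
  Finset.univ.sup fun S : Finset V => if S ⊆ W ∧ IsCo2Plex G S then S.card else 0

/-- Facet-defining inequality of a full-dimensional polytope in ℝ^α: a valid
inequality whose tight points contain `card α` affinely independent points. -/
def IsFacet {α : Type*} [Fintype α] (P : Set (α → ℝ)) (a : α → ℝ) (c : ℝ) : Prop :=
  (∀ x ∈ P, ∑ v, a v * x v ≤ c) ∧
  ∃ f : Fin (Fintype.card α) → (α → ℝ),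
    AffineIndependent ℝ f ∧ ∀ i, f i ∈ P ∧ ∑ v, a v * f i v = c

/-- The polytope T(G) given by bounds and the star inequalities. -/
def TPoly (G : SimpleGraph V) [DecidableRel G.Adj] : Set (V → ℝ) :=
  {x | (∀ v, 0 ≤ x v ∧ x v ≤ 1) ∧
    ∀ (w : V), ∀ W ⊆ G.neighborFinset w,
      ∑ v ∈ W, x v + ((W.card : ℝ) - 1) * x w ≤ (W.card : ℝ)}

/-- Total dual integrality of the system `A x ≤ b`. -/
def IsTDI {ι κ : Type*} [Fintype ι] [Fintype κ] (A : ι → κ → ℝ) (b : ι → ℝ) : Prop :=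
  ∀ c : κ → ℤ, ∀ m : ℝ,
    IsGreatest {t | ∃ x : κ → ℝ, (∀ i, ∑ j, A i j * x j ≤ b i) ∧ t = ∑ j, (c j : ℝ) * x j} m →
    ∃ π : ι → ℤ, (∀ i, 0 ≤ π i) ∧ (∀ j, ∑ i, (π i : ℝ) * A i j = (c j : ℝ)) ∧
      ∑ i, (π i : ℝ) * b i = m


namespace IsCo2Plex

variable {α : Type*} {G : SimpleGraph α} {S W : Finset α} {w : α}

theorem card_inter_le_one (hS : IsCo2Plex G S) (hw : w ∈ S) (hW : ∀ v ∈ W, G.Adj w v) :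
    (W ∩ S).card ≤ 1 :=
  (card_le_card fun v hv => by
    obtain ⟨hvW, hvS⟩ := mem_inter.1 hv
    exact mem_filter.2 ⟨hvS, hW v hvW⟩).trans (hS w hw)

theorem star_ineq_chiV (hS : IsCo2Plex G S) (hW : ∀ v ∈ W, G.Adj w v) :
    ∑ v ∈ W, chiV S v + ((W.card : ℝ) - 1) * chiV S w ≤ (W.card : ℝ) := by
  have hsum : ∑ v ∈ W, chiV S v = ((W ∩ S).card : ℝ) := by
    simp only [chiV, sum_boole, filter_mem_eq_inter]
  rw [hsum]
  by_cases hw : w ∈ S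
  · have h : ((W ∩ S).card : ℝ) ≤ 1 := by exact_mod_cast hS.card_inter_le_one hw hW
    simp only [chiV, if_pos hw]
    linarith
  · simp only [chiV, if_neg hw, mul_zero, add_zero]
    exact_mod_cast card_le_card inter_subset_left

end IsCo2Plex

def starForm {α : Type*} (W : Finset α) (w : α) : (α → ℝ) →ₗ[ℝ] ℝ where
  toFun x := ∑ v ∈ W, x v + ((W.card : ℝ) - 1) * x w
  map_add' x y := by
    simp only [Pi.add_apply, sum_add_distrib]
    ring
  map_smul' c x := by
    simp only [Pi.smul_apply, smul_eq_mul, ← mul_sum, RingHom.id_apply]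
    ring

/-- Star inequalities are valid for the co-2-plex polytope. -/
theorem stmt7 (G : SimpleGraph V) [DecidableRel G.Adj]
    (x : V → ℝ) (hx : x ∈ co2PlexPolytope G)
    (w : V) (W : Finset V) (hW : W ⊆ G.neighborFinset w) :
    ∑ v ∈ W, x v + ((W.card : ℝ) - 1) * x w ≤ (W.card : ℝ) := by
  have hadj : ∀ v ∈ W, G.Adj w v := fun v hv => (G.mem_neighborFinset w v).1 (hW hv)
  refine convexHull_min ?_ (convex_halfSpace_le (starForm W w).isLinear _) hx
  rintro _ ⟨S, hS, rfl⟩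
  exact hS.star_ineq_chiV hadj

end
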